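/- arXiv:2403.19106 — 3 statements merged into one kernel-verified Lean document; each statement's English description precedes it below -/
import Mathlib

section
/- Let ℓ be a natural number and λ', λ'', λ''' complex numbers with λ''' = λ' + λ'' + 2ℓ. If λ', λ'', λ''' are integers with 2 ≥ λ' + λ'' + λ''' and λ''' ≥ |λ' - λ''| + 2, then for every j with 0 ≤ j ≤ ℓ, the coefficient (-1)^j · (λ' + ℓ - 1)_j · (λ'' + ℓ - 1)_{ℓ-j} / (j! (ℓ-j)!) of the Rankin–Cohen bracket is zero. -/
/-- The descending factorial `(x)_n = x (x-1) ⋯ (x-n+1)` of a complex number. -/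
noncomputable def descFactorial (x : ℂ) (n : ℕ) : ℂ :=
  ∏ i ∈ Finset.range n, (x - i)

lemma descFactorial_int_zero (k : ℤ) (n : ℕ) (h0 : 0 ≤ k) (h1 : k < n) :
    descFactorial (k : ℂ) n = 0 := by
  unfold descFactorial
  apply Finset.prod_eq_zero (i := k.toNat)
  · simp only [Finset.mem_range]
    omega
  · rw [sub_eq_zero]
    norm_cast
    omega

/-- If `λ''' = λ' + λ'' + 2ℓ` and `λ', λ'', λ'''` are integers with
`2 ≥ λ' + λ'' + λ'''` and `λ''' ≥ |λ' - λ''| + 2`, then every coefficient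
`(-1)^j (λ'+ℓ-1)_j (λ''+ℓ-1)_{ℓ-j} / (j! (ℓ-j)!)` of the Rankin–Cohen bracket vanishes. -/
theorem rankinCohen_coeff_eq_zero (ℓ : ℕ) (lam' lam'' lam''' : ℂ)
    (hsum : lam''' = lam' + lam'' + 2 * ℓ)
    (hint : ∃ a b c : ℤ, lam' = a ∧ lam'' = b ∧ lam''' = c ∧
      a + b + c ≤ 2 ∧ |a - b| + 2 ≤ c) :
    ∀ j : ℕ, j ≤ ℓ →
      (-1 : ℂ) ^ j * descFactorial (lam' + ℓ - 1) j * descFactorial (lam'' + ℓ - 1) (ℓ - j) /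
        (Nat.factorial j * Nat.factorial (ℓ - j)) = 0 := by
  obtain ⟨a, b, c, ha, hb, hc, hle, habs⟩ := hint
  intro j hj
  have hceq : (c : ℂ) = (a : ℂ) + b + 2 * ℓ := by rw [← ha, ← hb, ← hc]; exact hsum
  have hcint : c = a + b + 2 * ℓ := by exact_mod_cast hceq
  have habs' := abs_le.mp (show |a - b| ≤ a + b + 2 * ℓ - 2 by omega)
  obtain ⟨hl, hr⟩ := habs'
  have h1 : 1 ≤ a + ℓ := by omega
  have h2 : 1 ≤ b + ℓ := by omega
  have h3 : a + b + ℓ ≤ 1 := by omega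
  have e1 : lam' + ℓ - 1 = ((a + ℓ - 1 : ℤ) : ℂ) := by rw [ha]; push_cast; ring
  have e2 : lam'' + ℓ - 1 = ((b + ℓ - 1 : ℤ) : ℂ) := by rw [hb]; push_cast; ring
  rw [e1, e2]
  by_cases hcase : a + ℓ ≤ j
  · rw [descFactorial_int_zero (a + ℓ - 1) j (by omega) (by omega)]
    ring
  · rw [descFactorial_int_zero (b + ℓ - 1) (ℓ - j) (by omega) (by omega)]
    ring
end

section
/- Let ℓ ∈ ℕ and λ', λ'' ∈ ℂ. Then the product (λ'+ℓ-1)_j (λ''+ℓ-1)_{ℓ-j} vanishes for all 0 ≤ j ≤ ℓ if and only if there exist natural numbers a, b with a + b ≤ ℓ - 1 such that λ' + ℓ - 1 = a and λ'' + ℓ - 1 = b. -/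
lemma descFactorial_eq_zero_iff (x : ℂ) (n : ℕ) :
    descFactorial x n = 0 ↔ ∃ i < n, x = (i : ℂ) := by
  simp [descFactorial, Finset.prod_eq_zero_iff, sub_eq_zero]

lemma descFactorial_nat_ne_zero {a n : ℕ} (h : n ≤ a) :
    descFactorial (a : ℂ) n ≠ 0 := by
  rw [Ne, descFactorial_eq_zero_iff]
  rintro ⟨i, hi, he⟩
  have : a = i := Nat.cast_injective he
  omega

lemma descFactorial_nat_eq_zero {a n : ℕ} (h : a < n) :
    descFactorial (a : ℂ) n = 0 := by
  rw [descFactorial_eq_zero_iff]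
  exact ⟨a, h, rfl⟩

/-- The products `(λ'+ℓ-1)_j (λ''+ℓ-1)_{ℓ-j}` vanish for all `0 ≤ j ≤ ℓ` if and only if
there exist natural numbers `a, b` with `a + b ≤ ℓ - 1` (i.e. `a + b < ℓ`) such that
`λ' + ℓ - 1 = a` and `λ'' + ℓ - 1 = b`. -/
theorem rankinCohen_vanishing_iff (ℓ : ℕ) (lam' lam'' : ℂ) :
    (∀ j : ℕ, j ≤ ℓ →
        descFactorial (lam' + ℓ - 1) j * descFactorial (lam'' + ℓ - 1) (ℓ - j) = 0) ↔
      ∃ a b : ℕ, a + b < ℓ ∧ lam' + ℓ - 1 = a ∧ lam'' + ℓ - 1 = b := by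
  set x := lam' + ℓ - 1
  set y := lam'' + ℓ - 1
  constructor
  · intro h
    have hx : descFactorial x ℓ = 0 := by
      have := h ℓ le_rfl
      simpa [descFactorial] using this
    have hy : descFactorial y ℓ = 0 := by
      have := h 0 (Nat.zero_le _)
      simpa [descFactorial] using this
    obtain ⟨a, ha, hxa⟩ := (descFactorial_eq_zero_iff x ℓ).1 hx
    obtain ⟨b, hb, hyb⟩ := (descFactorial_eq_zero_iff y ℓ).1 hy
    refine ⟨a, b, ?_, hxa, hyb⟩
    by_contra hab
    push_neg at hab
    have hj : ℓ - b ≤ ℓ := Nat.sub_le _ _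
    have := h (ℓ - b) hj
    rw [hxa, hyb] at this
    have h1 : descFactorial (a : ℂ) (ℓ - b) ≠ 0 := descFactorial_nat_ne_zero (by omega)
    have h2 : descFactorial (b : ℂ) (ℓ - (ℓ - b)) ≠ 0 := descFactorial_nat_ne_zero (by omega)
    exact mul_ne_zero h1 h2 this
  · rintro ⟨a, b, hab, hxa, hyb⟩ j hj
    rw [hxa, hyb]
    rcases le_or_gt j a with hja | hja
    · have : descFactorial (b : ℂ) (ℓ - j) = 0 := descFactorial_nat_eq_zero (by omega)
      rw [this, mul_zero]
    · rw [descFactorial_nat_eq_zero hja, zero_mul]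
end

section
/- Let g = sl₂(ℂ). For all k ∈ ℕ and all μ', μ'' ∈ ℂ, the space of g-module homomorphisms Hom_g(M(μ'+μ''-2k), M(μ')⊗M(μ'')) is nonzero, where M(λ) denotes the Verma module of highest weight λ. -/
/-!
A homomorphism out of the Verma module `M(λ)` is determined by the image of its highest weight
vector, which can be any singular vector of weight `λ` (killed by `e`, `h`-eigenvalue `λ`).
In `M(μ') ⊗ M(μ'')` the vectors `f^i v' ⊗ f^j v''` with `i + j = k` span a `(k+1)`-dimensional
space on which `h` acts by `μ' + μ'' - 2k`, and `e` maps it into the `k`-dimensional span of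
those with `i + j = k - 1`; so `e` has a nonzero kernel there, giving the singular vector.
-/

open TensorProduct

/-- A module `M` over a Lie algebra containing an `sl₂`-triple `e, f, h` is the Verma
module of highest weight `μ` with highest weight vector `v` if `e⬝v = 0`, `h⬝v = μ•v`,
and the vectors `f^k·v` (`k ∈ ℕ`) form a basis of `M`. -/
structure IsSl2Verma {L : Type*} [LieRing L] [LieAlgebra ℂ L] (e f h : L)
    (M : Type*) [AddCommGroup M] [Module ℂ M] [LieRingModule L M] [LieModule ℂ L M]
    (μ : ℂ) (v : M) : Prop where
  lie_e : ⁅e, v⁆ = 0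
  lie_h : ⁅h, v⁆ = μ • v
  indep : LinearIndependent ℂ fun k : ℕ => ((LieModule.toEnd ℂ L M f) ^ k) v
  spans : Submodule.span ℂ (Set.range fun k : ℕ => ((LieModule.toEnd ℂ L M f) ^ k) v) = ⊤

open LieModule Finset.HasAntidiagonal

section Sl2Action

variable {R L M : Type*} [CommRing R] [LieRing L] [LieAlgebra R L]
  [AddCommGroup M] [Module R M] [LieRingModule L M] [LieModule R L M]
  {e f h : L} {μ : R} {v : M}

lemma LieModule.toEnd_pow_succ_apply (x : L) (n : ℕ) (m : M) :
    (toEnd R L M x ^ (n + 1)) m = ⁅x, (toEnd R L M x ^ n) m⁆ := by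
  rw [pow_succ', Module.End.mul_apply, toEnd_apply_apply]

lemma lie_h_toEnd_f_pow (hhf : ⁅h, f⁆ = (-2 : R) • f) (hv : ⁅h, v⁆ = μ • v) (n : ℕ) :
    ⁅h, (toEnd R L M f ^ n) v⁆ = (μ - 2 * n) • (toEnd R L M f ^ n) v := by
  induction n with
  | zero => simpa using hv
  | succ n ih =>
    rw [toEnd_pow_succ_apply, leibniz_lie, hhf, smul_lie, ih, lie_smul,
      ← toEnd_pow_succ_apply]
    push_cast
    module

/-- At `n = 0` the exponent `n - 1` truncates to `0`, harmlessly: the coefficient vanishes. -/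
lemma lie_e_toEnd_f_pow (hhf : ⁅h, f⁆ = (-2 : R) • f) (hef : ⁅e, f⁆ = h)
    (he : ⁅e, v⁆ = 0) (hv : ⁅h, v⁆ = μ • v) (n : ℕ) :
    ⁅e, (toEnd R L M f ^ n) v⁆ = (n * (μ - n + 1)) • (toEnd R L M f ^ (n - 1)) v := by
  induction n with
  | zero => simpa using he
  | succ n ih =>
    rw [toEnd_pow_succ_apply, leibniz_lie, hef, lie_h_toEnd_f_pow hhf hv, ih, lie_smul]
    cases n with
    | zero => simp
    | succ n =>
      rw [Nat.add_sub_cancel, ← toEnd_pow_succ_apply]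
      push_cast
      module

variable {N : Type*} [AddCommGroup N] [Module R N] [LieRingModule L N] [LieModule R L N]

lemma LinearMap.map_lie_of_span_eq_top (φ : N →ₗ[R] M) {S : Set L} {T : Set N}
    (hS : Submodule.span R S = ⊤) (hT : Submodule.span R T = ⊤)
    (hφ : ∀ x ∈ S, ∀ n ∈ T, φ ⁅x, n⁆ = ⁅x, φ n⁆) (x : L) (n : N) :
    φ ⁅x, n⁆ = ⁅x, φ n⁆ := by
  have hx : x ∈ Submodule.span R S := hS ▸ Submodule.mem_top
  induction hx using Submodule.span_induction generalizing n with
  | mem x hx =>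
    have hcomm : φ ∘ₗ toEnd R L N x = toEnd R L M x ∘ₗ φ :=
      LinearMap.ext_on hT fun n hn => hφ x hx n hn
    exact LinearMap.congr_fun hcomm n
  | zero => simp
  | add x y _ _ hx hy => simp [add_lie, hx, hy]
  | smul r x _ hx => simp [smul_lie, hx]

end Sl2Action

section Verma

variable {L : Type*} [LieRing L] [LieAlgebra ℂ L] {e f h : L}
  {M : Type*} [AddCommGroup M] [Module ℂ M] [LieRingModule L M] [LieModule ℂ L M]
  {N : Type*} [AddCommGroup N] [Module ℂ N] [LieRingModule L N] [LieModule ℂ L N]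
  {μ : ℂ} {w : N}

noncomputable def IsSl2Verma.basis (hN : IsSl2Verma e f h N μ w) : Module.Basis ℕ ℂ N :=
  Module.Basis.mk hN.indep hN.spans.ge

lemma IsSl2Verma.basis_apply (hN : IsSl2Verma e f h N μ w) (n : ℕ) :
    hN.basis n = (toEnd ℂ L N f ^ n) w :=
  Module.Basis.mk_apply _ _ n

lemma IsSl2Verma.exists_lieModuleHom_apply_eq (hN : IsSl2Verma e f h N μ w)
    (hhf : ⁅h, f⁆ = (-2 : ℂ) • f) (hef : ⁅e, f⁆ = h)
    (hspan : Submodule.span ℂ ({e, f, h} : Set L) = ⊤)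
    {u : M} (he : ⁅e, u⁆ = 0) (hh : ⁅h, u⁆ = μ • u) :
    ∃ φ : N →ₗ⁅ℂ,L⁆ M, φ w = u := by
  let φ : N →ₗ[ℂ] M := hN.basis.constr ℂ fun n => (toEnd ℂ L M f ^ n) u
  have hφ (n : ℕ) : φ ((toEnd ℂ L N f ^ n) w) = (toEnd ℂ L M f ^ n) u := by
    rw [← hN.basis_apply, Module.Basis.constr_basis]
  have hφ_lie : ∀ x ∈ ({e, f, h} : Set L), ∀ m ∈ Set.range fun n => (toEnd ℂ L N f ^ n) w,
      φ ⁅x, m⁆ = ⁅x, φ m⁆ := by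
    rintro x hx _ ⟨n, rfl⟩
    rcases hx with rfl | rfl | rfl
    · rw [lie_e_toEnd_f_pow hhf hef hN.lie_e hN.lie_h, map_smul, hφ, hφ,
        lie_e_toEnd_f_pow hhf hef he hh]
    · rw [← toEnd_pow_succ_apply, hφ, hφ, toEnd_pow_succ_apply]
    · rw [lie_h_toEnd_f_pow hhf hN.lie_h, map_smul, hφ, lie_h_toEnd_f_pow hhf hh]
  exact ⟨{ φ with map_lie' := φ.map_lie_of_span_eq_top hspan hN.spans hφ_lie _ _ },
    by simpa using hφ 0⟩

end Verma

section TensorSpan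

variable {R L M' M'' : Type*} [CommRing R] [LieRing L] [LieAlgebra R L]
  [AddCommGroup M'] [Module R M'] [LieRingModule L M'] [LieModule R L M']
  [AddCommGroup M''] [Module R M''] [LieRingModule L M''] [LieModule R L M'']
  {e f h : L} {μ' μ'' : R} {v' : M'} {v'' : M''} {i j k : ℕ} {u : M' ⊗[R] M''}

variable (R) in
noncomputable def fPowTensorSpan (f : L) (v' : M') (v'' : M'') (k : ℕ) :
    Submodule R (M' ⊗[R] M'') :=
  Submodule.span R (Set.range fun p : antidiagonal k =>
    (toEnd R L M' f ^ p.1.1) v' ⊗ₜ[R] (toEnd R L M'' f ^ p.1.2) v'')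

lemma tmul_mem_fPowTensorSpan (hij : i + j = k) :
    (toEnd R L M' f ^ i) v' ⊗ₜ[R] (toEnd R L M'' f ^ j) v'' ∈ fPowTensorSpan R f v' v'' k :=
  Submodule.subset_span ⟨⟨(i, j), mem_antidiagonal.mpr hij⟩, rfl⟩

lemma fPowTensorSpan_le_iff {P : Submodule R (M' ⊗[R] M'')} :
    fPowTensorSpan R f v' v'' k ≤ P ↔
      ∀ i j, i + j = k → (toEnd R L M' f ^ i) v' ⊗ₜ[R] (toEnd R L M'' f ^ j) v'' ∈ P := by
  simp [fPowTensorSpan, Submodule.span_le, Set.range_subset_iff]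

lemma lie_h_of_mem_fPowTensorSpan (hhf : ⁅h, f⁆ = (-2 : R) • f)
    (hv' : ⁅h, v'⁆ = μ' • v') (hv'' : ⁅h, v''⁆ = μ'' • v'')
    (hu : u ∈ fPowTensorSpan R f v' v'' k) :
    ⁅h, u⁆ = (μ' + μ'' - 2 * k) • u := by
  suffices fPowTensorSpan R f v' v'' k ≤
      Module.End.eigenspace (toEnd R L (M' ⊗[R] M'') h) (μ' + μ'' - 2 * k) from
    Module.End.mem_eigenspace_iff.mp (this hu)
  refine fPowTensorSpan_le_iff.mpr fun i j hij => ?_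
  rw [Module.End.mem_eigenspace_iff, toEnd_apply_apply,
    TensorProduct.LieModule.lie_tmul_right, lie_h_toEnd_f_pow hhf hv',
    lie_h_toEnd_f_pow hhf hv'', ← smul_tmul', tmul_smul, ← hij]
  push_cast
  module

lemma lie_e_mem_fPowTensorSpan (hhf : ⁅h, f⁆ = (-2 : R) • f) (hef : ⁅e, f⁆ = h)
    (he' : ⁅e, v'⁆ = 0) (hv' : ⁅h, v'⁆ = μ' • v')
    (he'' : ⁅e, v''⁆ = 0) (hv'' : ⁅h, v''⁆ = μ'' • v'')
    (hu : u ∈ fPowTensorSpan R f v' v'' (k + 1)) :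
    ⁅e, u⁆ ∈ fPowTensorSpan R f v' v'' k := by
  suffices fPowTensorSpan R f v' v'' (k + 1) ≤
      (fPowTensorSpan R f v' v'' k).comap (toEnd R L (M' ⊗[R] M'') e) from this hu
  refine fPowTensorSpan_le_iff.mpr fun i j hij => ?_
  rw [Submodule.mem_comap, toEnd_apply_apply,
    TensorProduct.LieModule.lie_tmul_right, lie_e_toEnd_f_pow hhf hef he' hv',
    lie_e_toEnd_f_pow hhf hef he'' hv'', ← smul_tmul', tmul_smul]
  refine add_mem ?_ ?_
  · rcases i with _ | i
    · simp
    · exact Submodule.smul_mem _ _ (tmul_mem_fPowTensorSpan (by omega))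
  · rcases j with _ | j
    · simp
    · exact Submodule.smul_mem _ _ (tmul_mem_fPowTensorSpan (by omega))

end TensorSpan

section VermaTensor

variable {L : Type*} [LieRing L] [LieAlgebra ℂ L] {e f h : L}
  {M' : Type*} [AddCommGroup M'] [Module ℂ M'] [LieRingModule L M'] [LieModule ℂ L M']
  {M'' : Type*} [AddCommGroup M''] [Module ℂ M''] [LieRingModule L M''] [LieModule ℂ L M'']
  {μ' μ'' : ℂ} {v' : M'} {v'' : M''}

lemma IsSl2Verma.tensorProduct_basis_apply (hV' : IsSl2Verma e f h M' μ' v')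
    (hV'' : IsSl2Verma e f h M'' μ'' v'') (i j : ℕ) :
    hV'.basis.tensorProduct hV''.basis (i, j) =
      (toEnd ℂ L M' f ^ i) v' ⊗ₜ[ℂ] (toEnd ℂ L M'' f ^ j) v'' := by
  rw [Module.Basis.tensorProduct_apply, hV'.basis_apply, hV''.basis_apply]

lemma finrank_fPowTensorSpan (hV' : IsSl2Verma e f h M' μ' v')
    (hV'' : IsSl2Verma e f h M'' μ'' v'') (k : ℕ) :
    Module.finrank ℂ (fPowTensorSpan ℂ f v' v'' k) = k + 1 := by
  have hli : LinearIndependent ℂ fun p : antidiagonal k =>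
      (toEnd ℂ L M' f ^ p.1.1) v' ⊗ₜ[ℂ] (toEnd ℂ L M'' f ^ p.1.2) v'' := by
    simpa only [Function.comp_def, hV'.tensorProduct_basis_apply hV''] using
      (hV'.basis.tensorProduct hV''.basis).linearIndependent.comp _ Subtype.val_injective
  rw [fPowTensorSpan, finrank_span_eq_card hli, Fintype.card_coe,
    Finset.Nat.card_antidiagonal]

lemma exists_ne_zero_lie_e_eq_zero_mem_fPowTensorSpan (hhf : ⁅h, f⁆ = (-2 : ℂ) • f)
    (hef : ⁅e, f⁆ = h) (hV' : IsSl2Verma e f h M' μ' v')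
    (hV'' : IsSl2Verma e f h M'' μ'' v'') (k : ℕ) :
    ∃ u ∈ fPowTensorSpan ℂ f v' v'' k, u ≠ 0 ∧ ⁅e, u⁆ = 0 := by
  cases k with
  | zero =>
    refine ⟨v' ⊗ₜ[ℂ] v'', tmul_mem_fPowTensorSpan (i := 0) (j := 0) rfl, ?_, ?_⟩
    · simpa [hV'.tensorProduct_basis_apply hV''] using
        (hV'.basis.tensorProduct hV''.basis).ne_zero (0, 0)
    · rw [TensorProduct.LieModule.lie_tmul_right, hV'.lie_e, hV''.lie_e, zero_tmul, tmul_zero,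
        add_zero]
  | succ k =>
    let E : fPowTensorSpan ℂ f v' v'' (k + 1) →ₗ[ℂ] fPowTensorSpan ℂ f v' v'' k :=
      (toEnd ℂ L (M' ⊗[ℂ] M'') e).restrict fun _ hu =>
        lie_e_mem_fPowTensorSpan hhf hef hV'.lie_e hV'.lie_h hV''.lie_e hV''.lie_h hu
    have hfin (n : ℕ) : FiniteDimensional ℂ (fPowTensorSpan ℂ f v' v'' n) :=
      Module.finite_of_finrank_pos (by rw [finrank_fPowTensorSpan hV' hV'']; omega)
    have hker : LinearMap.ker E ≠ ⊥ := LinearMap.ker_ne_bot_of_finrank_lt (by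
      rw [finrank_fPowTensorSpan hV' hV'', finrank_fPowTensorSpan hV' hV'']; omega)
    obtain ⟨⟨u, hu⟩, hEu, hu0⟩ := Submodule.exists_mem_ne_zero_of_ne_bot hker
    exact ⟨u, hu, fun hu0' => hu0 (Subtype.ext hu0'), congrArg Subtype.val hEu⟩

end VermaTensor

theorem hom_verma_tensor_nonzero_general (L : Type*) [LieRing L] [LieAlgebra ℂ L]
    (e f h : L)
    (hhf : ⁅h, f⁆ = (-2 : ℂ) • f) (hef : ⁅e, f⁆ = h)
    (hspan : Submodule.span ℂ ({e, f, h} : Set L) = ⊤)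
    (μ' μ'' : ℂ) (k : ℕ)
    (M' : Type*) [AddCommGroup M'] [Module ℂ M'] [LieRingModule L M'] [LieModule ℂ L M']
    (M'' : Type*) [AddCommGroup M''] [Module ℂ M''] [LieRingModule L M''] [LieModule ℂ L M'']
    (N : Type*) [AddCommGroup N] [Module ℂ N] [LieRingModule L N] [LieModule ℂ L N]
    (v' : M') (v'' : M'') (w : N)
    (hV' : IsSl2Verma e f h M' μ' v') (hV'' : IsSl2Verma e f h M'' μ'' v'')
    (hN : IsSl2Verma e f h N (μ' + μ'' - 2 * k) w) :
    ∃ φ : N →ₗ⁅ℂ,L⁆ M' ⊗[ℂ] M'', φ ≠ 0 := by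
  obtain ⟨u, hu, hu0, hue⟩ := exists_ne_zero_lie_e_eq_zero_mem_fPowTensorSpan hhf hef hV' hV'' k
  obtain ⟨φ, hφ⟩ := hN.exists_lieModuleHom_apply_eq hhf hef hspan hue
    (lie_h_of_mem_fPowTensorSpan hhf hV'.lie_h hV''.lie_h hu)
  exact ⟨φ, fun hφ0 => hu0 (by rw [← hφ, hφ0, LieModuleHom.zero_apply])⟩

/-- Let `g = sl₂(ℂ)` (spanned by an `sl₂`-triple `e, f, h`). For all `k ∈ ℕ` and
`μ', μ'' ∈ ℂ`, the space `Hom_g(M(μ'+μ''-2k), M(μ')⊗M(μ''))` of `g`-module homomorphisms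
is nonzero, where `M(λ)` denotes the Verma module of highest weight `λ` and the tensor
product carries the diagonal `g`-action. -/
theorem hom_verma_tensor_nonzero (L : Type*) [LieRing L] [LieAlgebra ℂ L]
    (e f h : L)
    (hhe : ⁅h, e⁆ = (2 : ℂ) • e) (hhf : ⁅h, f⁆ = (-2 : ℂ) • f) (hef : ⁅e, f⁆ = h)
    (hspan : Submodule.span ℂ ({e, f, h} : Set L) = ⊤)
    (μ' μ'' : ℂ) (k : ℕ)
    (M' : Type*) [AddCommGroup M'] [Module ℂ M'] [LieRingModule L M'] [LieModule ℂ L M']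
    (M'' : Type*) [AddCommGroup M''] [Module ℂ M''] [LieRingModule L M''] [LieModule ℂ L M'']
    (N : Type*) [AddCommGroup N] [Module ℂ N] [LieRingModule L N] [LieModule ℂ L N]
    (v' : M') (v'' : M'') (w : N)
    (hV' : IsSl2Verma e f h M' μ' v') (hV'' : IsSl2Verma e f h M'' μ'' v'')
    (hN : IsSl2Verma e f h N (μ' + μ'' - 2 * k) w) :
    ∃ φ : N →ₗ⁅ℂ,L⁆ M' ⊗[ℂ] M'', φ ≠ 0 :=
  hom_verma_tensor_nonzero_general L e f h hhf hef hspan μ' μ'' k M' M'' N v' v'' w hV' hV'' hN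
end
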